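/- arXiv:2011.03982 — 8 statements merged into one kernel-verified Lean document; each statement's English description precedes it below -/
import Mathlib

section
/- Fix real parameters a < b, β > 0, r > 0 and δ ∈ ℝ. For each α ∈ (0,1) set θ(α) := (b−a)/(1−α) and λ(α) := ((a²−b²) − 2(δ−r))/(2(α−1)), and let x₊(a;α) be the largest real root of the quadratic x ↦ (1/2)·θ(α)²x² − (λ(α)−β−θ(α)a)x − (r+β) (which exists since its value at 0 is −(r+β) < 0). Then the map α ↦ θ(α)·x₊(a;α) is strictly increasing on (0,1); equivalently, θ(α)·x₊(a;α) = I(α) + √(I(α)² + 2(r+β)) with I(α) := β(1−α)/(a−b) + ((a−b)² + 2(δ−r))/(2(b−a)), and this expression is strictly increasing in α. In particular, the portfolio fraction π = θ·x₊(a)/σ is strictly decreasing in the relative risk-aversion parameter 1−α. -/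
lemma sqrt_aux (c t u : ℝ) (hc : 0 < c) (h : t < u) :
    t + Real.sqrt (t ^ 2 + c) < u + Real.sqrt (u ^ 2 + c) := by
  have hs : Real.sqrt (u ^ 2 + c) ^ 2 = u ^ 2 + c := Real.sq_sqrt (by positivity)
  have hs0 : 0 ≤ Real.sqrt (u ^ 2 + c) := Real.sqrt_nonneg _
  have hs' : -u < Real.sqrt (u ^ 2 + c) := by nlinarith
  have key : Real.sqrt (t ^ 2 + c) < (u - t) + Real.sqrt (u ^ 2 + c) := by
    have hy : 0 < (u - t) + Real.sqrt (u ^ 2 + c) := by linarith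
    rw [Real.sqrt_lt' hy]
    nlinarith
  linarith

/-- Fix real parameters a < b, β > 0, r > 0 and δ ∈ ℝ. For each α ∈ (0,1) set
θ(α) := (b−a)/(1−α) and λ(α) := ((a²−b²) − 2(δ−r))/(2(α−1)), and let x₊(a;α) be the largest
real root of the quadratic x ↦ (1/2)·θ(α)²x² − (λ(α)−β−θ(α)a)x − (r+β). Then the map
α ↦ θ(α)·x₊(a;α) is strictly increasing on (0,1); equivalently,
θ(α)·x₊(a;α) = I(α) + √(I(α)² + 2(r+β)) with
I(α) := β(1−α)/(a−b) + ((a−b)² + 2(δ−r))/(2(b−a)), and this expression is strictly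
increasing in α. -/
theorem stmt_6 (a b β r δ : ℝ) (hab : a < b) (hβ : 0 < β) (hr : 0 < r)
    (θ lam I : ℝ → ℝ)
    (hθ : ∀ α, θ α = (b - a) / (1 - α))
    (hlam : ∀ α, lam α = ((a ^ 2 - b ^ 2) - 2 * (δ - r)) / (2 * (α - 1)))
    (hI : ∀ α, I α = β * (1 - α) / (a - b) + ((a - b) ^ 2 + 2 * (δ - r)) / (2 * (b - a)))
    (Q : ℝ → ℝ → ℝ)
    (hQ : ∀ α x, Q α x = (1 / 2) * (θ α) ^ 2 * x ^ 2 - (lam α - β - θ α * a) * x - (r + β)) :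
    (∀ α ∈ Set.Ioo (0 : ℝ) 1, ∀ x, (Q α x = 0 ∧ ∀ y, Q α y = 0 → y ≤ x) →
        θ α * x = I α + Real.sqrt ((I α) ^ 2 + 2 * (r + β))) ∧
    StrictMonoOn (fun α => I α + Real.sqrt ((I α) ^ 2 + 2 * (r + β))) (Set.Ioo (0 : ℝ) 1) ∧
    (∀ α₁ ∈ Set.Ioo (0 : ℝ) 1, ∀ α₂ ∈ Set.Ioo (0 : ℝ) 1, α₁ < α₂ →
      ∀ x₁ x₂, (Q α₁ x₁ = 0 ∧ ∀ y, Q α₁ y = 0 → y ≤ x₁) →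
        (Q α₂ x₂ = 0 ∧ ∀ y, Q α₂ y = 0 → y ≤ x₂) →
        θ α₁ * x₁ < θ α₂ * x₂) := by
  have hba : (0:ℝ) < b - a := sub_pos.mpr hab
  have hbane : b - a ≠ 0 := ne_of_gt hba
  have habne : a - b ≠ 0 := by intro h; apply hbane; linarith
  -- key algebraic identity
  have key : ∀ α ∈ Set.Ioo (0:ℝ) 1, θ α * I α = lam α - β - θ α * a := by
    rintro α ⟨hα0, hα1⟩
    have h1 : (1:ℝ) - α ≠ 0 := by intro h; linarith
    have h2 : α - 1 ≠ 0 := by intro h; linarith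
    rw [hθ, hlam, hI]
    field_simp
    ring
  -- part 1
  have part1 : ∀ α ∈ Set.Ioo (0 : ℝ) 1, ∀ x, (Q α x = 0 ∧ ∀ y, Q α y = 0 → y ≤ x) →
      θ α * x = I α + Real.sqrt ((I α) ^ 2 + 2 * (r + β)) := by
    rintro α hα x ⟨hx, hmax⟩
    obtain ⟨hα0, hα1⟩ := hα
    have hθpos : 0 < θ α := by rw [hθ]; apply div_pos hba; linarith
    set s := Real.sqrt ((I α) ^ 2 + 2 * (r + β)) with hsdef
    have hs2 : s ^ 2 = (I α) ^ 2 + 2 * (r + β) := Real.sq_sqrt (by positivity)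
    have hspos : 0 < s := Real.sqrt_pos.mpr (by positivity)
    have hk := key α ⟨hα0, hα1⟩
    have hQ' : ∀ y, Q α y = (1/2) * (θ α * y) ^ 2 - I α * (θ α * y) - (r + β) := by
      intro y; rw [hQ, ← hk]; ring
    have hstar : Q α ((I α + s) / θ α) = 0 := by
      have hθx : θ α * ((I α + s) / θ α) = I α + s := by
        field_simp
      rw [hQ', hθx]
      linear_combination (1/2) * hs2
    have hge : (I α + s) / θ α ≤ x := hmax _ hstar
    have hge' : I α + s ≤ θ α * x := by
      rw [div_le_iff₀ hθpos] at hge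
      linarith [mul_comm (θ α) x]
    rw [hQ'] at hx
    have heq : (θ α * x - I α - s) * (θ α * x - I α + s) = 0 := by
      linear_combination 2 * hx - hs2
    rcases mul_eq_zero.mp heq with h | h
    · linarith
    · linarith
  -- part 2
  have hImono : ∀ α₁ ∈ Set.Ioo (0:ℝ) 1, ∀ α₂ ∈ Set.Ioo (0:ℝ) 1, α₁ < α₂ → I α₁ < I α₂ := by
    rintro α₁ _ α₂ _ hlt
    rw [hI, hI]
    have hneg : a - b < 0 := by linarith
    have : β * (1 - α₁) / (a - b) < β * (1 - α₂) / (a - b) := by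
      rw [div_eq_mul_inv, div_eq_mul_inv]
      have hinv : (a - b)⁻¹ < 0 := by simpa using inv_lt_zero.mpr hneg
      have hprod : β * (1 - α₂) < β * (1 - α₁) := by nlinarith
      exact mul_lt_mul_of_neg_right hprod hinv
    linarith
  have part2 : StrictMonoOn (fun α => I α + Real.sqrt ((I α) ^ 2 + 2 * (r + β)))
      (Set.Ioo (0 : ℝ) 1) := by
    intro α₁ h1 α₂ h2 hlt
    exact sqrt_aux (2 * (r + β)) (I α₁) (I α₂) (by positivity) (hImono α₁ h1 α₂ h2 hlt)
  refine ⟨part1, part2, ?_⟩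
  intro α₁ h1 α₂ h2 hlt x₁ x₂ hx1 hx2
  rw [part1 α₁ h1 x₁ hx1, part1 α₂ h2 x₂ hx2]
  exact part2 h1 h2 hlt
end

section
/- Fix real parameters 0 < α < 1, β > 0, r > 0 and δ ∈ ℝ, and set δ̂ := β + (δ−r)/(α−1). Define G(t) := (1−α)·t/2 − δ̂/t and F(t) := G(t) + √(G(t)² + 2(r+β)) for t > 0. If δ̂ ≥ 0, then F is strictly increasing on (0,∞). In particular, since θ·x₊(a) = F(θ) with θ = (b−a)/(1−α), the optimal portfolio fraction π = θ·x₊(a)/σ is increasing with respect to b−a. -/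
lemma aux_mono (c : ℝ) (hc : 0 < c) {x y : ℝ} (hxy : x < y) :
    x + Real.sqrt (x ^ 2 + c) < y + Real.sqrt (y ^ 2 + c) := by
  set sx := Real.sqrt (x ^ 2 + c) with hsx
  set sy := Real.sqrt (y ^ 2 + c) with hsy
  have hx2 : sx ^ 2 = x ^ 2 + c := Real.sq_sqrt (by positivity)
  have hy2 : sy ^ 2 = y ^ 2 + c := Real.sq_sqrt (by positivity)
  have hxgt : -x < sx := by
    nlinarith [Real.sqrt_nonneg (x ^ 2 + c), hx2]
  have hygt : -y < sy := by
    nlinarith [Real.sqrt_nonneg (y ^ 2 + c), hy2]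
  have hsum : 0 < sx + sy + x + y := by linarith
  nlinarith [hx2, hy2, mul_pos (sub_pos.mpr hxy) hsum,
    Real.sqrt_nonneg (x ^ 2 + c), Real.sqrt_nonneg (y ^ 2 + c)]

/-- Fix real parameters 0 < α < 1, β > 0, r > 0 and δ ∈ ℝ, and set
δ̂ := β + (δ−r)/(α−1). Define G(t) := (1−α)·t/2 − δ̂/t and F(t) := G(t) + √(G(t)² + 2(r+β))
for t > 0. If δ̂ ≥ 0, then F is strictly increasing on (0,∞). -/
theorem stmt_7 (α β r δ : ℝ) (hα0 : 0 < α) (hα1 : α < 1) (hβ : 0 < β) (hr : 0 < r)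
    (δhat : ℝ) (hδhat : δhat = β + (δ - r) / (α - 1))
    (G F : ℝ → ℝ)
    (hG : ∀ t, G t = (1 - α) * t / 2 - δhat / t)
    (hF : ∀ t, F t = G t + Real.sqrt ((G t) ^ 2 + 2 * (r + β)))
    (hpos : 0 ≤ δhat) :
    StrictMonoOn F (Set.Ioi 0) := by
  intro x hx y hy hxy
  have hx0 : (0 : ℝ) < x := hx
  have hy0 : (0 : ℝ) < y := hy
  have hGxy : G x < G y := by
    rw [hG, hG]
    have hdiv : δhat / y ≤ δhat / x :=
      div_le_div_of_nonneg_left hpos hx0 hxy.le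
    nlinarith
  rw [hF, hF]
  exact aux_mono (2 * (r + β)) (by linarith) hGxy
end

section
/- Fix real parameters 0 < α < 1, β > 0, r > 0 and δ ∈ ℝ with δ > α·r, and set δ̂ := β + (δ−r)/(α−1). Define G(t) := (1−α)·t/2 − δ̂/t and F(t) := G(t) + √(G(t)² + 2(r+β)) for t > 0. If δ̂ < 0 and δ − 2αδ + α²r + βα(1−α) ≤ 0, then F is strictly decreasing on the open interval (0, √(2(δ−αr)/(α(1−α)))). In particular, the optimal portfolio fraction π = θ·x₊(a)/σ is decreasing with respect to b−a over the admissible parameter range 0 < (b−a)² < 2(1−α)(δ−αr)/α. -/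
lemma mono_aux (c : ℝ) (hc : 0 < c) {u v : ℝ} (huv : u < v) :
    u + Real.sqrt (u ^ 2 + c) < v + Real.sqrt (v ^ 2 + c) := by
  have hu : |u| < Real.sqrt (u ^ 2 + c) := by
    rw [← Real.sqrt_sq_eq_abs]
    exact Real.sqrt_lt_sqrt (sq_nonneg u) (by linarith)
  have hv : |v| < Real.sqrt (v ^ 2 + c) := by
    rw [← Real.sqrt_sq_eq_abs]
    exact Real.sqrt_lt_sqrt (sq_nonneg v) (by linarith)
  have hA := Real.sq_sqrt (show (0:ℝ) ≤ u ^ 2 + c by positivity)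
  have hB := Real.sq_sqrt (show (0:ℝ) ≤ v ^ 2 + c by positivity)
  have h1 : -u < Real.sqrt (u ^ 2 + c) := lt_of_le_of_lt (neg_le_abs u) hu
  have h2 : -v < Real.sqrt (v ^ 2 + c) := lt_of_le_of_lt (neg_le_abs v) hv
  nlinarith [mul_pos (show (0:ℝ) < v - u by linarith)
    (show (0:ℝ) < Real.sqrt (u ^ 2 + c) + Real.sqrt (v ^ 2 + c) + u + v by linarith),
    Real.sqrt_nonneg (u ^ 2 + c), Real.sqrt_nonneg (v ^ 2 + c)]

/-- Fix real parameters 0 < α < 1, β > 0, r > 0 and δ ∈ ℝ with δ > α·r, and set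
δ̂ := β + (δ−r)/(α−1). Define G(t) := (1−α)·t/2 − δ̂/t and F(t) := G(t) + √(G(t)² + 2(r+β))
for t > 0. If δ̂ < 0 and δ − 2αδ + α²r + βα(1−α) ≤ 0, then F is strictly decreasing on the
open interval (0, √(2(δ−αr)/(α(1−α)))). -/
theorem stmt_8 (α β r δ : ℝ) (hα0 : 0 < α) (hα1 : α < 1) (hβ : 0 < β) (hr : 0 < r)
    (hδ : α * r < δ)
    (δhat : ℝ) (hδhat : δhat = β + (δ - r) / (α - 1))
    (G F : ℝ → ℝ)
    (hG : ∀ t, G t = (1 - α) * t / 2 - δhat / t)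
    (hF : ∀ t, F t = G t + Real.sqrt ((G t) ^ 2 + 2 * (r + β)))
    (hneg : δhat < 0)
    (hcase : δ - 2 * α * δ + α ^ 2 * r + β * α * (1 - α) ≤ 0) :
    StrictAntiOn F (Set.Ioo 0 (Real.sqrt (2 * (δ - α * r) / (α * (1 - α))))) := by
  intro x hx y hy hxy
  obtain ⟨hx0, hxT⟩ := hx
  obtain ⟨hy0, hyT⟩ := hy
  have hα1' : (0:ℝ) < 1 - α := by linarith
  have hαα : (0:ℝ) < α * (1 - α) := mul_pos hα0 hα1'
  -- δhat * (α-1) = β*(α-1) + (δ-r)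
  have hδe : δhat * (α - 1) = β * (α - 1) + (δ - r) := by
    rw [hδhat]
    field_simp [sub_ne_zero.mpr (show α ≠ 1 by linarith)]
  -- from hcase: δhat * (α*(1-α)) ≤ -((1-α)*(δ-α*r))
  have hδh : δhat * (α * (1 - α)) ≤ -((1 - α) * (δ - α * r)) := by nlinarith
  -- y² < T²
  have hy2 : y ^ 2 < 2 * (δ - α * r) / (α * (1 - α)) := (Real.lt_sqrt hy0.le).mp hyT
  have hy2' : y ^ 2 * (α * (1 - α)) < 2 * (δ - α * r) := (lt_div_iff₀ hαα).mp hy2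
  have hxylt : x * y < y ^ 2 := by nlinarith
  -- key inequality
  have h3 : ((1 - α) / 2 * (x * y) + δhat) * (α * (1 - α)) < 0 := by
    nlinarith [mul_lt_mul_of_pos_right hxylt
        (show (0:ℝ) < (1 - α) / 2 * (α * (1 - α)) by positivity),
      mul_lt_mul_of_pos_left hy2' (show (0:ℝ) < (1 - α) / 2 by linarith), hδh]
  have key : (1 - α) / 2 * (x * y) + δhat < 0 := by
    by_contra h
    push_neg at h
    nlinarith [mul_nonneg h hαα.le]
  -- G strictly decreasing here
  have hGlt : G y < G x := by
    rw [hG x, hG y]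
    have hxy0 : 0 < x * y := mul_pos hx0 hy0
    have hmul : ((1 - α) * y / 2 - δhat / y) * (x * y)
        < ((1 - α) * x / 2 - δhat / x) * (x * y) := by
      have e1 : ((1 - α) * y / 2 - δhat / y) * (x * y)
          = (1 - α) * y ^ 2 * x / 2 - δhat * x := by
        field_simp
      have e2 : ((1 - α) * x / 2 - δhat / x) * (x * y)
          = (1 - α) * x ^ 2 * y / 2 - δhat * y := by
        field_simp
      rw [e1, e2]
      nlinarith [mul_pos (show (0:ℝ) < y - x by linarith)
        (show (0:ℝ) < -((1 - α) / 2 * (x * y) + δhat) by linarith)]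
    exact lt_of_mul_lt_mul_right hmul hxy0.le
  rw [hF x, hF y]
  exact mono_aux (2 * (r + β)) (by positivity) hGlt
end

section
/- Fix real parameters 0 < α < 1, β > 0, r > 0 and δ ∈ ℝ with δ > α·r, and set δ̂ := β + (δ−r)/(α−1). Define G(t) := (1−α)·t/2 − δ̂/t and F(t) := G(t) + √(G(t)² + 2(r+β)) for t > 0. If δ̂ < 0 and δ − 2αδ + α²r + βα(1−α) > 0, then 2δ̂/(α−1) < 2(δ−αr)/(α(1−α)), F is strictly decreasing on (0, √(2δ̂/(α−1))), and F is strictly increasing on (√(2δ̂/(α−1)), √(2(δ−αr)/(α(1−α)))). -/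
/-!
Write `F = φ ∘ G` with `φ x = x + √(x² + 2(r + β))`, which is strictly increasing on `[0, ∞)`.
Since `δ̂ < 0`, `G t = a t + k / t` with `a = (1 - α)/2 > 0` and `k = -δ̂ > 0`, so `G` is positive
on `(0, ∞)` and, as `G t - G s = (t - s)(a s t - k)/(s t)`, it decreases up to `√(k / a)` and
increases afterwards; here `k / a = 2δ̂/(α - 1)`. The first claim is the identity
`2(δ - αr)/(α(1 - α)) - 2δ̂/(α - 1) = 2(δ - 2αδ + α²r + βα(1 - α))/(α(1 - α)²)`.
-/

open Set

lemma strictMonoOn_add_sqrt_sq_add (c : ℝ) :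
    StrictMonoOn (fun x : ℝ => x + √(x ^ 2 + c)) (Ici 0) := by
  intro x hx y _ hxy
  have hsq : x ^ 2 + c ≤ y ^ 2 + c := by nlinarith [mem_Ici.mp hx]
  have := Real.sqrt_le_sqrt hsq
  dsimp only
  linarith

section MulAddDiv

variable {a k : ℝ}

lemma mul_add_div_sub_mul_add_div {s t : ℝ} (hs : s ≠ 0) (ht : t ≠ 0) :
    (a * t + k / t) - (a * s + k / s) = (t - s) * (a * (s * t) - k) / (s * t) := by
  field_simp
  ring

lemma mapsTo_mul_add_div_Ioi_Ici (ha : 0 < a) (hk : 0 < k) :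
    MapsTo (fun t : ℝ => a * t + k / t) (Ioi 0) (Ici 0) :=
  fun t (ht : 0 < t) => mem_Ici.mpr (by positivity)

lemma strictAntiOn_mul_add_div (ha : 0 < a) (hk : 0 < k) :
    StrictAntiOn (fun t : ℝ => a * t + k / t) (Ioc 0 √(k / a)) := by
  intro s ⟨hs, _⟩ t ⟨ht, htc⟩ hst
  have hst_lt : s * t < k / a :=
    calc s * t < √(k / a) * √(k / a) := by
          nlinarith [mul_lt_mul_of_pos_right (hst.trans_le htc) ht]
      _ = k / a := Real.mul_self_sqrt (by positivity)
  have hneg : a * (s * t) - k < 0 := by linarith [(lt_div_iff₀' ha).mp hst_lt]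
  have hdiff := mul_add_div_sub_mul_add_div (a := a) (k := k) hs.ne' ht.ne'
  have : (t - s) * (a * (s * t) - k) / (s * t) < 0 :=
    div_neg_of_neg_of_pos (mul_neg_of_pos_of_neg (by linarith) hneg) (by positivity)
  dsimp only
  linarith

lemma strictMonoOn_mul_add_div (ha : 0 < a) (hk : 0 < k) :
    StrictMonoOn (fun t : ℝ => a * t + k / t) (Ici √(k / a)) := by
  intro s hs t _ hst
  have hc : 0 < √(k / a) := Real.sqrt_pos.mpr (by positivity)
  have hs0 : 0 < s := hc.trans_le hs
  have hst_gt : k / a < s * t :=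
    calc k / a = √(k / a) * √(k / a) := (Real.mul_self_sqrt (by positivity)).symm
      _ < s * t := by nlinarith [mem_Ici.mp hs]
  have hpos : 0 < a * (s * t) - k := by linarith [(div_lt_iff₀' ha).mp hst_gt]
  have hdiff := mul_add_div_sub_mul_add_div (a := a) (k := k) hs0.ne' (hs0.trans hst).ne'
  have : 0 < (t - s) * (a * (s * t) - k) / (s * t) :=
    div_pos (mul_pos (by linarith) hpos) (mul_pos hs0 (hs0.trans hst))
  dsimp only
  linarith

end MulAddDiv

lemma two_mul_div_sub_one_lt_two_mul_div_mul_one_sub {α β r δ : ℝ} (hα0 : 0 < α) (hα1 : α < 1)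
    (hcase : 0 < δ - 2 * α * δ + α ^ 2 * r + β * α * (1 - α)) :
    2 * (β + (δ - r) / (α - 1)) / (α - 1) < 2 * (δ - α * r) / (α * (1 - α)) := by
  have h1α : 0 < 1 - α := by linarith
  have hgap : 2 * (β + (δ - r) / (α - 1)) / (α - 1) = 2 * (δ - α * r) / (α * (1 - α))
      - 2 * (δ - 2 * α * δ + α ^ 2 * r + β * α * (1 - α)) / (α * (1 - α) ^ 2) := by
    have : α - 1 ≠ 0 := by linarith
    field_simp
    ring
  rw [hgap]
  have : 0 < 2 * (δ - 2 * α * δ + α ^ 2 * r + β * α * (1 - α)) / (α * (1 - α) ^ 2) := by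
    positivity
  linarith

theorem stmt_9_general (α β r δ : ℝ) (hα0 : 0 < α) (hα1 : α < 1)
    (δhat : ℝ) (hδhat : δhat = β + (δ - r) / (α - 1))
    (G F : ℝ → ℝ)
    (hG : ∀ t, G t = (1 - α) * t / 2 - δhat / t)
    (hF : ∀ t, F t = G t + Real.sqrt ((G t) ^ 2 + 2 * (r + β)))
    (hneg : δhat < 0)
    (hcase : 0 < δ - 2 * α * δ + α ^ 2 * r + β * α * (1 - α)) :
    2 * δhat / (α - 1) < 2 * (δ - α * r) / (α * (1 - α)) ∧
    StrictAntiOn F (Set.Ioo 0 (Real.sqrt (2 * δhat / (α - 1)))) ∧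
    StrictMonoOn F
      (Set.Ioo (Real.sqrt (2 * δhat / (α - 1)))
        (Real.sqrt (2 * (δ - α * r) / (α * (1 - α))))) := by
  have ha : 0 < (1 - α) / 2 := by linarith
  have hk : 0 < -δhat := by linarith
  have hGeq : G = fun t => (1 - α) / 2 * t + -δhat / t := funext fun t => by rw [hG]; ring
  have hFeq : F = (fun x => x + √(x ^ 2 + 2 * (r + β))) ∘ G := funext hF
  have hcrit : 2 * δhat / (α - 1) = -δhat / ((1 - α) / 2) := by
    have : α - 1 ≠ 0 := by linarith
    have : 1 - α ≠ 0 := by linarith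
    field_simp
    ring
  have hφ := strictMonoOn_add_sqrt_sq_add (2 * (r + β))
  have hGpos : MapsTo G (Ioi 0) (Ici 0) := hGeq ▸ mapsTo_mul_add_div_Ioi_Ici ha hk
  rw [hFeq, hcrit]
  refine ⟨hcrit ▸ hδhat ▸ two_mul_div_sub_one_lt_two_mul_div_mul_one_sub hα0 hα1 hcase, ?_, ?_⟩
  · refine hφ.comp_strictAntiOn ?_ (hGpos.mono_left Ioo_subset_Ioi_self)
    exact hGeq ▸ (strictAntiOn_mul_add_div ha hk).mono Ioo_subset_Ioc_self
  · refine hφ.comp ?_ (hGpos.mono_left fun t ht => (Real.sqrt_nonneg _).trans_lt ht.1)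
    exact hGeq ▸ (strictMonoOn_mul_add_div ha hk).mono fun t ht => le_of_lt ht.1

/-- Fix real parameters 0 < α < 1, β > 0, r > 0 and δ ∈ ℝ with δ > α·r, and set
δ̂ := β + (δ−r)/(α−1). Define G(t) := (1−α)·t/2 − δ̂/t and F(t) := G(t) + √(G(t)² + 2(r+β))
for t > 0. If δ̂ < 0 and δ − 2αδ + α²r + βα(1−α) > 0, then
2δ̂/(α−1) < 2(δ−αr)/(α(1−α)), F is strictly decreasing on (0, √(2δ̂/(α−1))), and F is
strictly increasing on (√(2δ̂/(α−1)), √(2(δ−αr)/(α(1−α)))). -/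
theorem stmt_9 (α β r δ : ℝ) (hα0 : 0 < α) (hα1 : α < 1) (hβ : 0 < β) (hr : 0 < r)
    (hδ : α * r < δ)
    (δhat : ℝ) (hδhat : δhat = β + (δ - r) / (α - 1))
    (G F : ℝ → ℝ)
    (hG : ∀ t, G t = (1 - α) * t / 2 - δhat / t)
    (hF : ∀ t, F t = G t + Real.sqrt ((G t) ^ 2 + 2 * (r + β)))
    (hneg : δhat < 0)
    (hcase : 0 < δ - 2 * α * δ + α ^ 2 * r + β * α * (1 - α)) :
    2 * δhat / (α - 1) < 2 * (δ - α * r) / (α * (1 - α)) ∧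
    StrictAntiOn F (Set.Ioo 0 (Real.sqrt (2 * δhat / (α - 1)))) ∧
    StrictMonoOn F
      (Set.Ioo (Real.sqrt (2 * δhat / (α - 1)))
        (Real.sqrt (2 * (δ - α * r) / (α * (1 - α))))) :=
  stmt_9_general α β r δ hα0 hα1 δhat hδhat G F hG hF hneg hcase
end

section
/- Let T > 0, let β : [0,T] → (0,∞) be continuous, let η ≥ 0 and let L : [0,T] → ℝ. Let μ be a finite Borel measure on [0,T] and define Y^μ(t) := η·exp(−∫_0^t β(s) ds) + ∫_{[0,t]} β(s)·exp(−∫_s^t β(u) du) dμ(s). If Y^μ(t) ≥ L(t) for all t ∈ [0,T], then for every t ∈ [0,T], Y^μ(t) ≥ exp(−∫_0^t β(s) ds) · max(η, sup_{v ∈ [0,t]} L(v)·exp(∫_0^v β(s) ds)). -/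
open MeasureTheory

/-- Let T > 0, let β : [0,T] → (0,∞) be continuous, let η ≥ 0 and let
L : [0,T] → ℝ. Let μ be a finite Borel measure on [0,T] and define
Y^μ(t) := η·exp(−∫_0^t β(s) ds) + ∫_{[0,t]} β(s)·exp(−∫_s^t β(u) du) dμ(s).
If Y^μ(t) ≥ L(t) for all t ∈ [0,T], then for every t ∈ [0,T],
Y^μ(t) ≥ exp(−∫_0^t β(s) ds) · max(η, sup_{v ∈ [0,t]} L(v)·exp(∫_0^v β(s) ds)). -/
theorem stmt_11 (T : ℝ) (hT : 0 < T) (β : ℝ → ℝ)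
    (hβc : ContinuousOn β (Set.Icc 0 T)) (hβpos : ∀ s ∈ Set.Icc 0 T, 0 < β s)
    (η : ℝ) (hη : 0 ≤ η) (L : ℝ → ℝ)
    (μ : Measure ℝ) (hμfin : IsFiniteMeasure μ) (hμsupp : μ (Set.Icc 0 T)ᶜ = 0)
    (Y : ℝ → ℝ)
    (hY : ∀ t, Y t = η * Real.exp (-∫ s in (0 : ℝ)..t, β s) +
        ∫ s in Set.Icc 0 t, β s * Real.exp (-∫ u in s..t, β u) ∂μ)
    (hYL : ∀ t ∈ Set.Icc 0 T, L t ≤ Y t) :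
    ∀ t ∈ Set.Icc 0 T,
      Real.exp (-∫ s in (0 : ℝ)..t, β s) *
        max η (sSup ((fun v => L v * Real.exp (∫ s in (0 : ℝ)..v, β s)) '' Set.Icc 0 t))
      ≤ Y t := by
  -- interval integrability of β on subintervals of [0,T]
  have hβint : ∀ a b, a ∈ Set.Icc 0 T → b ∈ Set.Icc 0 T → IntervalIntegrable β volume a b := by
    intro a b ha hb
    exact (hβc.mono (Set.uIcc_subset_Icc ha hb)).intervalIntegrable
  set g : ℝ → ℝ := fun s => β s * Real.exp (∫ u in (0:ℝ)..s, β u) with hg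
  have h0T : (0:ℝ) ∈ Set.Icc 0 T := ⟨le_rfl, hT.le⟩
  -- continuity of the primitive
  have hprim : ContinuousOn (fun s => ∫ u in (0:ℝ)..s, β u) (Set.Icc 0 T) := by
    have := intervalIntegral.continuousOn_primitive_interval
      (f := β) (a := (0:ℝ)) (b := T) (μ := volume)
      (by rw [Set.uIcc_of_le hT.le]; exact hβc.integrableOn_Icc)
    rwa [Set.uIcc_of_le hT.le] at this
  have hgc : ContinuousOn g (Set.Icc 0 T) := hβc.mul (hprim.rexp)
  have hgnn : ∀ s ∈ Set.Icc 0 T, 0 ≤ g s := fun s hs =>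
    mul_nonneg (hβpos s hs).le (Real.exp_pos _).le
  -- key identity: Y w * exp(∫_0^w β) = η + ∫_{[0,w]} g dμ  for w ∈ [0,T]
  have key : ∀ w ∈ Set.Icc 0 T,
      Y w * Real.exp (∫ s in (0:ℝ)..w, β s) = η + ∫ s in Set.Icc 0 w, g s ∂μ := by
    intro w hw
    rw [hY w, add_mul, mul_assoc, ← Real.exp_add, neg_add_cancel, Real.exp_zero, mul_one]
    congr 1
    rw [← integral_mul_const]
    refine setIntegral_congr_fun measurableSet_Icc ?_
    intro s hs
    have hsT : s ∈ Set.Icc 0 T := ⟨hs.1, hs.2.trans hw.2⟩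
    have hadd : (∫ u in (0:ℝ)..s, β u) + ∫ u in s..w, β u = ∫ u in (0:ℝ)..w, β u :=
      intervalIntegral.integral_add_adjacent_intervals (hβint 0 s h0T hsT) (hβint s w hsT hw)
    simp only [g]
    rw [mul_assoc, ← Real.exp_add]
    have h2 : (-∫ u in s..w, β u) + ∫ u in (0:ℝ)..w, β u = ∫ u in (0:ℝ)..s, β u := by linarith
    rw [h2]
  -- monotonicity / nonnegativity of the μ-integral part
  have hint : ∀ w ∈ Set.Icc 0 T, IntegrableOn g (Set.Icc 0 w) μ := by
    intro w hw
    exact (hgc.mono (Set.Icc_subset_Icc le_rfl hw.2)).integrableOn_compact isCompact_Icc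
  intro t ht
  have hIt : ∀ w ∈ Set.Icc 0 T, w ≤ t → (∫ s in Set.Icc 0 w, g s ∂μ) ≤ ∫ s in Set.Icc 0 t, g s ∂μ := by
    intro w hw hwt
    refine setIntegral_mono_set (hint t ht) ?_ ?_
    · filter_upwards [ae_restrict_mem measurableSet_Icc] with s hs
      exact hgnn s ⟨hs.1, hs.2.trans ht.2⟩
    · exact HasSubset.Subset.eventuallyLE (Set.Icc_subset_Icc le_rfl hwt)
  have hInn : 0 ≤ ∫ s in Set.Icc 0 t, g s ∂μ := by
    refine setIntegral_nonneg measurableSet_Icc ?_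
    intro s hs
    exact hgnn s ⟨hs.1, hs.2.trans ht.2⟩
  -- main bound
  set M := Y t * Real.exp (∫ s in (0:ℝ)..t, β s) with hM
  have hMkey := key t ht
  have hMnn : 0 ≤ M := by rw [hM, hMkey]; positivity
  have hmax : max η (sSup ((fun v => L v * Real.exp (∫ s in (0:ℝ)..v, β s)) '' Set.Icc 0 t)) ≤ M := by
    refine max_le ?_ ?_
    · rw [hM, hMkey]; linarith
    · refine Real.sSup_le ?_ hMnn
      rintro x ⟨v, hv, rfl⟩
      have hvT : v ∈ Set.Icc 0 T := ⟨hv.1, hv.2.trans ht.2⟩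
      have h1 : L v * Real.exp (∫ s in (0:ℝ)..v, β s)
          ≤ Y v * Real.exp (∫ s in (0:ℝ)..v, β s) :=
        mul_le_mul_of_nonneg_right (hYL v hvT) (Real.exp_pos _).le
      have h2 : Y v * Real.exp (∫ s in (0:ℝ)..v, β s) ≤ M := by
        rw [key v hvT, hM, hMkey]
        have := hIt v hvT hv.2
        linarith
      exact h1.trans h2
  calc Real.exp (-∫ s in (0:ℝ)..t, β s) *
        max η (sSup ((fun v => L v * Real.exp (∫ s in (0:ℝ)..v, β s)) '' Set.Icc 0 t))
      ≤ Real.exp (-∫ s in (0:ℝ)..t, β s) * M :=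
        mul_le_mul_of_nonneg_left hmax (Real.exp_pos _).le
    _ = Y t := by rw [hM, ← mul_assoc, mul_comm (Real.exp _) (Y t), mul_assoc, ← Real.exp_add,
        neg_add_cancel, Real.exp_zero, mul_one]
end

section
/- Let T > 0, let β : [0,T] → (0,∞) be continuous, let η ≥ 0 and let L : [0,T] → ℝ be continuous. Define M(t) := max(η, sup_{v ∈ [0,t]} L(v)·exp(∫_0^v β(s) ds)) for t ∈ [0,T]; M is nondecreasing and continuous except possibly for a jump of size (L(0)−η)⁺ at t = 0 when extended by M(t) := η for t < 0. Let μ_M be the Lebesgue–Stieltjes measure of this extension restricted to [0,T], and define the finite Borel measure ν on [0,T] by dν(s) := (β(s)·exp(∫_0^s β(u) du))^{-1} dμ_M(s). Then for every t ∈ [0,T]: η·exp(−∫_0^t β(s) ds) + ∫_{[0,t]} β(s)·exp(−∫_s^t β(u) du) dν(s) = exp(−∫_0^t β(s) ds)·M(t), and this quantity is greater than or equal to L(t). -/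
open MeasureTheory Set

/-! Put `F t = ∫₀ᵗ β`. The consumption kernel `β s · exp (-∫ₛᵗ β)` times the density
`(β s · exp (F s))⁻¹` of `ν` with respect to `μ_M` is the constant `exp (-F t)`, so the integral
over `[0, t]` is `exp (-F t) · μ_M [0, t] = exp (-F t) · (M t - η)`, because the Stieltjes
function equals `η` to the left of `0`. The inequality holds since `M t ≥ L t · exp (F t)`. -/

theorem leftLim_eq_of_forall_lt_eq {α β : Type*} [LinearOrder α] [TopologicalSpace α]
    [OrderTopology α] [TopologicalSpace β] [T2Space β] {f : α → β} {a : α} {c : β}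
    [(nhdsWithin a (Iio a)).NeBot] (h : ∀ x < a, f x = c) : Function.leftLim f a = c :=
  leftLim_eq_of_tendsto <| tendsto_const_nhds.congr' <|
    Filter.eventually_of_mem self_mem_nhdsWithin fun x hx => (h x hx).symm

theorem StieltjesFunction.measure_Icc_of_forall_lt_eq (f : StieltjesFunction ℝ) {a b c : ℝ}
    (h : ∀ x < a, f x = c) : f.measure (Icc a b) = ENNReal.ofReal (f b - c) := by
  rw [f.measure_Icc, leftLim_eq_of_forall_lt_eq h]

theorem setIntegral_withDensity_ofReal_of_mul_eq {X : Type*} [MeasurableSpace X] {μ : Measure X}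
    {s : Set X} {g h : X → ℝ} {c : ℝ} (hs : MeasurableSet s) (hg : AEMeasurable g (μ.restrict s))
    (hg_nonneg : ∀ x ∈ s, 0 ≤ g x) (hgh : ∀ x ∈ s, g x * h x = c) :
    ∫ x in s, h x ∂μ.withDensity (fun x => ENNReal.ofReal (g x)) = μ.real s * c := by
  change ∫ x in s, h x ∂μ.withDensity (fun x => ((g x).toNNReal : ENNReal)) = _
  rw [setIntegral_withDensity_eq_setIntegral_smul₀ hg.real_toNNReal _ hs,
    setIntegral_congr_fun hs (g := fun _ => c), setIntegral_const, smul_eq_mul]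
  intro x hx
  simp only [NNReal.smul_def, Real.coe_toNNReal _ (hg_nonneg x hx), smul_eq_mul, hgh x hx]

theorem continuousOn_primitive_Icc_of_continuousOn {β : ℝ → ℝ} {a b : ℝ} (hab : a ≤ b)
    (hβ : ContinuousOn β (Icc a b)) : ContinuousOn (fun x => ∫ u in a..x, β u) (Icc a b) := by
  rw [← uIcc_of_le hab] at hβ ⊢
  exact intervalIntegral.continuousOn_primitive_interval hβ.integrableOn_uIcc

theorem inv_mul_exp_integral_mul_eq_exp_neg_integral {β : ℝ → ℝ} {a s t : ℝ}
    (has : IntervalIntegrable β volume a s) (hst : IntervalIntegrable β volume s t)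
    (hβs : β s ≠ 0) :
    (β s * Real.exp (∫ u in a..s, β u))⁻¹ * (β s * Real.exp (-∫ u in s..t, β u)) =
      Real.exp (-∫ u in a..t, β u) := by
  rw [← intervalIntegral.integral_add_adjacent_intervals has hst, neg_add, Real.exp_add]
  simp only [Real.exp_neg]
  field_simp

theorem stmt_12_general (T : ℝ) (β : ℝ → ℝ)
    (hβc : ContinuousOn β (Set.Icc 0 T)) (hβpos : ∀ s ∈ Set.Icc 0 T, 0 < β s)
    (η : ℝ) (L : ℝ → ℝ) (hL : ContinuousOn L (Set.Icc 0 T))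
    (M : ℝ → ℝ)
    (hM : ∀ t ∈ Set.Icc 0 T,
      M t = max η (sSup ((fun v => L v * Real.exp (∫ s in (0 : ℝ)..v, β s)) '' Set.Icc 0 t)))
    (f : StieltjesFunction ℝ)
    (hf_neg : ∀ t < (0 : ℝ), f t = η)
    (hf_pos : ∀ t ∈ Set.Icc 0 T, f t = M t) :
    ∀ t ∈ Set.Icc 0 T,
      η * Real.exp (-∫ s in (0 : ℝ)..t, β s) +
        ∫ s in Set.Icc 0 t, β s * Real.exp (-∫ u in s..t, β u)
          ∂((f.measure.restrict (Set.Icc 0 T)).withDensity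
              (fun s => ENNReal.ofReal ((β s * Real.exp (∫ u in (0 : ℝ)..s, β u))⁻¹)))
        = Real.exp (-∫ s in (0 : ℝ)..t, β s) * M t ∧
      L t ≤ Real.exp (-∫ s in (0 : ℝ)..t, β s) * M t := by
  intro t ht
  have hsub : Icc 0 t ⊆ Icc 0 T := Icc_subset_Icc_right ht.2
  have hβt := hβc.mono hsub
  have hβint : ∀ x ∈ Icc 0 t, ∀ y ∈ Icc 0 t, IntervalIntegrable β volume x y :=
    fun x hx y hy => (hβt.mono (uIcc_subset_Icc hx hy)).intervalIntegrable
  have hF := continuousOn_primitive_Icc_of_continuousOn ht.1 hβt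
  have hdensity_pos : ∀ s ∈ Icc 0 t, 0 < β s * Real.exp (∫ u in (0 : ℝ)..s, β u) :=
    fun s hs => mul_pos (hβpos s (hsub hs)) (Real.exp_pos _)
  have hLM : L t * Real.exp (∫ s in (0 : ℝ)..t, β s) ≤ M t := by
    rw [hM t ht]
    exact (((hL.mono hsub).mul hF.rexp).le_sSup_image_Icc ⟨ht.1, le_rfl⟩).trans (le_max_right _ _)
  have hmass : f.measure.real (Icc 0 t) = M t - η := by
    rw [measureReal_def, f.measure_Icc_of_forall_lt_eq hf_neg, hf_pos t ht,
      ENNReal.toReal_ofReal (sub_nonneg.2 (hM t ht ▸ le_max_left _ _))]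
  have hint := setIntegral_withDensity_ofReal_of_mul_eq (μ := f.measure.restrict (Icc 0 T))
    (g := fun s => (β s * Real.exp (∫ u in (0 : ℝ)..s, β u))⁻¹) measurableSet_Icc
    (((hβt.mul hF.rexp).inv₀ fun s hs => (hdensity_pos s hs).ne').aemeasurable measurableSet_Icc)
    (fun s hs => (inv_pos.2 (hdensity_pos s hs)).le)
    (fun s hs => inv_mul_exp_integral_mul_eq_exp_neg_integral
      (hβint 0 ⟨le_rfl, ht.1⟩ s hs) (hβint s hs t ⟨ht.1, le_rfl⟩) (hβpos s (hsub hs)).ne')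
  rw [measureReal_restrict_apply measurableSet_Icc, inter_eq_left.2 hsub, hmass] at hint
  refine ⟨by rw [hint]; ring, ?_⟩
  rw [Real.exp_neg, ← div_eq_inv_mul, le_div_iff₀ (Real.exp_pos _)]
  exact hLM

/-- Let T > 0, β : [0,T] → (0,∞) continuous, η ≥ 0, L : [0,T] → ℝ continuous.
Define M(t) := max(η, sup_{v ∈ [0,t]} L(v)·exp(∫_0^v β(s) ds)) for t ∈ [0,T]; M is
nondecreasing and continuous except possibly for a jump at t = 0 when extended by M(t) := η
for t < 0. Let μ_M be the Lebesgue–Stieltjes measure of this extension restricted to [0,T]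
(modelled by a Stieltjes function f agreeing with the extension of M on (−∞,0) ∪ [0,T]),
and define the finite Borel measure ν on [0,T] by
dν(s) := (β(s)·exp(∫_0^s β(u) du))^{-1} dμ_M(s). Then for every t ∈ [0,T]:
η·exp(−∫_0^t β(s) ds) + ∫_{[0,t]} β(s)·exp(−∫_s^t β(u) du) dν(s)
  = exp(−∫_0^t β(s) ds)·M(t), and this quantity is ≥ L(t). -/
theorem stmt_12 (T : ℝ) (hT : 0 < T) (β : ℝ → ℝ)
    (hβc : ContinuousOn β (Set.Icc 0 T)) (hβpos : ∀ s ∈ Set.Icc 0 T, 0 < β s)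
    (η : ℝ) (hη : 0 ≤ η) (L : ℝ → ℝ) (hL : ContinuousOn L (Set.Icc 0 T))
    (M : ℝ → ℝ)
    (hM : ∀ t ∈ Set.Icc 0 T,
      M t = max η (sSup ((fun v => L v * Real.exp (∫ s in (0 : ℝ)..v, β s)) '' Set.Icc 0 t)))
    (f : StieltjesFunction ℝ)
    (hf_neg : ∀ t < (0 : ℝ), f t = η)
    (hf_pos : ∀ t ∈ Set.Icc 0 T, f t = M t) :
    ∀ t ∈ Set.Icc 0 T,
      η * Real.exp (-∫ s in (0 : ℝ)..t, β s) +
        ∫ s in Set.Icc 0 t, β s * Real.exp (-∫ u in s..t, β u)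
          ∂((f.measure.restrict (Set.Icc 0 T)).withDensity
              (fun s => ENNReal.ofReal ((β s * Real.exp (∫ u in (0 : ℝ)..s, β u))⁻¹)))
        = Real.exp (-∫ s in (0 : ℝ)..t, β s) * M t ∧
      L t ≤ Real.exp (-∫ s in (0 : ℝ)..t, β s) * M t :=
  stmt_12_general T β hβc hβpos η L hL M hM f hf_neg hf_pos
end

section
/- Fix real parameters 0 < α < 1, η ≥ 0, β > 0, r > 0, K > 0 and δ ∈ ℝ with α·r < δ < r + (1−α)·β. Set ρ := (δ−r)/(α−1) (so that ρ + β > 0 and ρ < r) and define M(t) := max(η, K^{1/(α−1)}·e^{(ρ+β)t}) for t ≥ 0, extended by M(t) := η for t < 0, and let μ_M denote the associated Lebesgue–Stieltjes measure on [0,∞). Then the discounted cost of the tracking consumption plan satisfies: (1/β)·∫_{[0,∞)} e^{−(r+β)t} dμ_M(t) = K^{1/(α−1)}·(1−α)(β+r)/(β(δ−αr)) − η/β if η ≤ K^{1/(α−1)}, and (1/β)·∫_{[0,∞)} e^{−(r+β)t} dμ_M(t) = ((1−α)β + r − δ)/(β(δ−αr)) · η^{(αr−δ)/((1−α)β+r−δ)}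 · K^{−(r+β)/((1−α)β+r−δ)} if η > K^{1/(α−1)}. -/
/-! With `A = K^{1/(α-1)}`, `γ = ρ + β` and `T ≥ 0` chosen so that `A e^{γT} = max A η`, the
function `M` is `t ↦ A e^{γ max(t, T)}` plus a step of height `max A η - η` at `0`. Hence `μ_M` is
an atom of that mass at `0` plus the density `A γ e^{γt}` on `[T, ∞)`, and the discounted integral
is `(max A η - η) + A γ / (r + β - γ) · e^{(γ - r - β) T}`. The two cases of the theorem are
`T = 0` (when `η ≤ A`) and `T = log (η / A) / γ` (when `A < η`). -/

open MeasureTheory Set Real ProbabilityTheory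
open scoped NNReal

theorem ProbabilityTheory.cdf_dirac (a t : ℝ) :
    cdf (Measure.dirac a) t = if t < a then 0 else 1 := by
  rw [cdf_eq_real]
  split_ifs with ht
  · simp [measureReal_def, ht]
  · simp [measureReal_def, not_lt.1 ht]

theorem mul_exp_mul_log_div_div_eq_rpow {A η : ℝ} (hA : 0 < A) (hη : 0 < η) (a b : ℝ) :
    A * exp (a * (log (η / A) / b)) = η ^ (a / b) * A ^ (1 - a / b) := by
  rw [rpow_def_of_pos hη, rpow_def_of_pos hA, ← exp_add, log_div hη.ne' hA.ne']
  nth_rw 1 [← exp_log hA]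
  rw [← exp_add]
  ring_nf

namespace StieltjesFunction

theorem measure_eq_withDensity_of_integral_eq (g : StieltjesFunction ℝ) {g' : ℝ → ℝ}
    (hg'_int : LocallyIntegrable g') (hg'_nonneg : ∀ x, 0 ≤ g' x)
    (hg : ∀ a b, a ≤ b → ∫ x in a..b, g' x = g b - g a) :
    g.measure = volume.withDensity fun x => ENNReal.ofReal (g' x) := by
  refine Measure.ext_of_Ioc _ _ fun a b hab => ?_
  have hint : IntegrableOn g' (Ioc a b) :=
    (hg'_int.integrableOn_isCompact isCompact_Icc).mono_set Ioc_subset_Icc_self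
  rw [g.measure_Ioc, withDensity_apply _ measurableSet_Ioc,
    ← ofReal_integral_eq_lintegral_ofReal hint (.of_forall hg'_nonneg),
    ← intervalIntegral.integral_of_le hab.le, hg a b hab.le]

noncomputable def expMax (A γ T : ℝ) (hA : 0 ≤ A) (hγ : 0 ≤ γ) : StieltjesFunction ℝ where
  toFun t := A * exp (γ * max t T)
  mono' _ _ h := by dsimp only; gcongr
  right_continuous' _ :=
    (by fun_prop : Continuous fun t => A * exp (γ * max t T)).continuousWithinAt

section expMax

variable {A γ T : ℝ} (hA : 0 ≤ A) (hγ : 0 ≤ γ)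

theorem expMax_apply (t : ℝ) : expMax A γ T hA hγ t = A * exp (γ * max t T) := rfl

theorem continuous_expMax : Continuous (expMax A γ T hA hγ) :=
  show Continuous fun t => A * exp (γ * max t T) by fun_prop

theorem hasDerivWithinAt_expMax (x : ℝ) :
    HasDerivWithinAt (expMax A γ T hA hγ) ((Ici T).indicator (fun t => A * γ * exp (γ * t)) x)
      (Ioi x) x := by
  have hexp : HasDerivAt (fun t => A * exp (γ * t)) (A * γ * exp (γ * x)) x := by
    simpa [mul_comm, mul_left_comm, mul_assoc] using
      ((hasDerivAt_id x).const_mul γ).exp.const_mul A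
  rcases lt_or_ge x T with hxT | hTx
  · rw [indicator_of_notMem (notMem_Ici.2 hxT)]
    refine (hasDerivAt_const x (A * exp (γ * T))).hasDerivWithinAt.congr_of_eventuallyEq ?_ ?_
    · filter_upwards [nhdsWithin_le_nhds (Iio_mem_nhds hxT)] with t ht
      simp only [expMax_apply, max_eq_right (mem_Iio.1 ht).le]
    · simp [expMax_apply, max_eq_right hxT.le]
  · rw [indicator_of_mem (mem_Ici.2 hTx)]
    refine hexp.hasDerivWithinAt.congr (fun t ht => ?_) ?_
    · simp [expMax_apply, max_eq_left (hTx.trans (le_of_lt ht))]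
    · simp [expMax_apply, max_eq_left hTx]

theorem measure_expMax :
    (expMax A γ T hA hγ).measure =
      volume.withDensity fun x =>
        ENNReal.ofReal ((Ici T).indicator (fun t => A * γ * exp (γ * t)) x) := by
  have hint : LocallyIntegrable ((Ici T).indicator fun t => A * γ * exp (γ * t)) :=
    (Continuous.locallyIntegrable (by fun_prop)).indicator measurableSet_Ici
  refine measure_eq_withDensity_of_integral_eq _ hint
    (indicator_nonneg fun t _ => by positivity) fun a b hab =>
      intervalIntegral.integral_eq_sub_of_hasDeriv_right_of_le hab
        (continuous_expMax hA hγ).continuousOn (fun x _ => hasDerivWithinAt_expMax hA hγ x)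
        (hint.integrableOn_isCompact isCompact_uIcc).intervalIntegrable

theorem setIntegral_Ici_exp_neg_measure_expMax {ν : ℝ} (hT : 0 ≤ T) (hγν : γ < ν) :
    ∫ t in Ici 0, exp (-ν * t) ∂(expMax A γ T hA hγ).measure
      = A * γ / (ν - γ) * exp ((γ - ν) * T) := by
  have hmeas : Measurable ((Ici T).indicator fun t => A * γ * exp (γ * t)) :=
    (Continuous.measurable (by fun_prop)).indicator measurableSet_Ici
  have hintegrand : EqOn
      (fun t => (ENNReal.ofReal ((Ici T).indicator (fun t => A * γ * exp (γ * t)) t)).toReal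
        • exp (-ν * t))
      ((Ici T).indicator fun t => A * γ * exp ((γ - ν) * t)) (Ici 0) := by
    intro t _
    by_cases ht : t ∈ Ici T
    · dsimp only
      rw [indicator_of_mem ht, indicator_of_mem ht, ENNReal.toReal_ofReal (by positivity),
        smul_eq_mul, mul_assoc, ← exp_add]
      ring_nf
    · simp [indicator_of_notMem ht]
  rw [measure_expMax, setIntegral_withDensity_eq_setIntegral_toReal_smul hmeas.ennreal_ofReal
      (.of_forall fun _ => ENNReal.ofReal_lt_top) _ measurableSet_Ici,
    setIntegral_congr_fun measurableSet_Ici hintegrand, setIntegral_indicator measurableSet_Ici,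
    inter_eq_right.2 (Ici_subset_Ici.2 hT), integral_Ici_eq_integral_Ioi, integral_const_mul,
    integral_exp_mul_Ioi (by linarith), neg_div, ← div_neg, neg_sub]
  ring

end expMax

section max

variable (f : StieltjesFunction ℝ) {η A γ ν : ℝ}

theorem measure_eq_measure_expMax_add_dirac {T : ℝ} (hA : 0 ≤ A) (hγ : 0 ≤ γ) (hT : 0 ≤ T)
    (hAT : A * exp (γ * T) = max A η)
    (hf : ∀ t, f t = if t < 0 then η else max η (A * exp (γ * t))) :
    f.measure = (expMax A γ T hA hγ).measure + (max A η - η).toNNReal • Measure.dirac 0 := by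
  set c : ℝ≥0 := (max A η - η).toNNReal
  have hc : (c : ℝ) = max A η - η := Real.coe_toNNReal _ (sub_nonneg.2 (le_max_right A η))
  have hmono : Monotone fun s => A * exp (γ * s) := fun a b hab => by dsimp only; gcongr
  have hdecomp : f = expMax A γ T hA hγ + c • cdf (Measure.dirac 0) + .const ℝ (-c) := by
    ext t
    rw [hf, add_apply, add_apply, const_apply, expMax_apply,
      show (c • cdf (Measure.dirac 0)) t = c * cdf (Measure.dirac 0) t from rfl, cdf_dirac, hc]
    split_ifs with ht
    · rw [max_eq_right (ht.le.trans hT), hAT]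
      ring
    · have hAle : A ≤ A * exp (γ * t) :=
        le_mul_of_one_le_right hA (one_le_exp (mul_nonneg hγ (not_lt.1 ht)))
      rw [hmono.map_max, hAT, max_comm η, ← max_assoc, max_eq_left hAle]
      ring
  rw [hdecomp, measure_add, measure_add, measure_const, add_zero, measure_smul, measure_cdf]

theorem setIntegral_Ici_exp_neg_of_eq_max {T : ℝ} (hA : 0 < A) (hγ : 0 < γ) (hγν : γ < ν)
    (hT : 0 ≤ T) (hAT : A * exp (γ * T) = max A η)
    (hf : ∀ t, f t = if t < 0 then η else max η (A * exp (γ * t))) :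
    ∫ t in Ici 0, exp (-ν * t) ∂f.measure
      = (max A η - η) + A * γ / (ν - γ) * exp ((γ - ν) * T) := by
  have hexpMax := setIntegral_Ici_exp_neg_measure_expMax hA.le hγ.le hT hγν
  rw [measure_eq_measure_expMax_add_dirac f hA.le hγ.le hT hAT hf, Measure.restrict_add,
    Measure.restrict_smul, restrict_dirac, if_pos self_mem_Ici,
    -- integrable because its integral, computed above, is nonzero
    integral_add_measure (.of_integral_ne_zero (by rw [hexpMax]; positivity))
      (integrable_dirac enorm_lt_top).smul_measure_nnreal, hexpMax,
    integral_smul_nnreal_measure, integral_dirac, mul_zero, exp_zero, NNReal.smul_def,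
    smul_eq_mul, mul_one, Real.coe_toNNReal _ (sub_nonneg.2 (le_max_right A η)), add_comm]

theorem setIntegral_Ici_exp_neg_of_le (hA : 0 < A) (hγ : 0 < γ) (hγν : γ < ν)
    (hf : ∀ t, f t = if t < 0 then η else max η (A * exp (γ * t))) (hle : η ≤ A) :
    ∫ t in Ici 0, exp (-ν * t) ∂f.measure = A * ν / (ν - γ) - η := by
  rw [setIntegral_Ici_exp_neg_of_eq_max f hA hγ hγν le_rfl
    (by rw [mul_zero, exp_zero, mul_one, max_eq_left hle]) hf,
    max_eq_left hle, mul_zero, exp_zero, mul_one]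
  have : ν - γ ≠ 0 := (sub_pos.2 hγν).ne'
  field_simp
  ring

theorem setIntegral_Ici_exp_neg_of_lt (hA : 0 < A) (hγ : 0 < γ) (hγν : γ < ν)
    (hf : ∀ t, f t = if t < 0 then η else max η (A * exp (γ * t))) (hlt : A < η) :
    ∫ t in Ici 0, exp (-ν * t) ∂f.measure = γ / (ν - γ) * η ^ ((γ - ν) / γ) * A ^ (ν / γ) := by
  have hη : 0 < η := hA.trans hlt
  rw [setIntegral_Ici_exp_neg_of_eq_max f hA hγ hγν (T := log (η / A) / γ)
    (div_nonneg (log_nonneg ((one_le_div hA).2 hlt.le)) hγ.le)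
    (by rw [mul_div_cancel₀ _ hγ.ne', exp_log (div_pos hη hA), mul_div_cancel₀ _ hA.ne',
      max_eq_right hlt.le]) hf,
    max_eq_right hlt.le, sub_self, zero_add, mul_comm A γ, mul_div_right_comm, mul_assoc,
    mul_exp_mul_log_div_div_eq_rpow hA hη, mul_assoc]
  congr 3
  field_simp
  ring

end max

end StieltjesFunction

open StieltjesFunction in
theorem stmt_13_general (α η β r K δ : ℝ) (hα1 : α < 1)
    (hβ : 0 < β) (hK : 0 < K)
    (hδ1 : α * r < δ) (hδ2 : δ < r + (1 - α) * β)
    (ρ : ℝ) (hρ : ρ = (δ - r) / (α - 1))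
    (f : StieltjesFunction ℝ)
    (hf : ∀ t : ℝ, f t = if t < 0 then η
        else max η (K ^ ((1 : ℝ) / (α - 1)) * Real.exp ((ρ + β) * t))) :
    (η ≤ K ^ ((1 : ℝ) / (α - 1)) →
      (1 / β) * ∫ t in Set.Ici (0 : ℝ), Real.exp (-(r + β) * t) ∂f.measure
        = K ^ ((1 : ℝ) / (α - 1)) * ((1 - α) * (β + r)) / (β * (δ - α * r)) - η / β) ∧
    (K ^ ((1 : ℝ) / (α - 1)) < η →
      (1 / β) * ∫ t in Set.Ici (0 : ℝ), Real.exp (-(r + β) * t) ∂f.measure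
        = ((1 - α) * β + r - δ) / (β * (δ - α * r)) *
            η ^ ((α * r - δ) / ((1 - α) * β + r - δ)) *
            K ^ (-(r + β) / ((1 - α) * β + r - δ))) := by
  have h1α : 0 < 1 - α := by linarith
  have hα1' : α - 1 ≠ 0 := by linarith
  have hD : 0 < (1 - α) * β + r - δ := by nlinarith
  have hδ : 0 < δ - α * r := by linarith
  have hγ_eq : ρ + β = ((1 - α) * β + r - δ) / (1 - α) := by
    rw [hρ]; field_simp; ring
  have hνγ_eq : r + β - (ρ + β) = (δ - α * r) / (1 - α) := by
    rw [hρ]; field_simp; ring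
  have hγ : 0 < ρ + β := hγ_eq ▸ div_pos hD h1α
  have hγν : ρ + β < r + β := sub_pos.1 (hνγ_eq ▸ div_pos hδ h1α)
  have hA : 0 < K ^ ((1 : ℝ) / (α - 1)) := rpow_pos_of_pos hK _
  refine ⟨fun hle => ?_, fun hlt => ?_⟩
  · rw [setIntegral_Ici_exp_neg_of_le f hA hγ hγν hf hle, hνγ_eq]
    field_simp
    ring
  · have hcoeff : (ρ + β) / (r + β - (ρ + β)) = ((1 - α) * β + r - δ) / (δ - α * r) := by
      rw [hνγ_eq, hγ_eq]; field_simp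
    have hη_exp : (ρ + β - (r + β)) / (ρ + β) = (α * r - δ) / ((1 - α) * β + r - δ) := by
      rw [← neg_sub, hνγ_eq, hγ_eq]; field_simp; ring
    have hK_exp : 1 / (α - 1) * ((r + β) / (ρ + β)) = -(r + β) / ((1 - α) * β + r - δ) := by
      rw [hγ_eq]; field_simp; ring
    rw [setIntegral_Ici_exp_neg_of_lt f hA hγ hγν hf hlt, ← rpow_mul hK.le, hcoeff, hη_exp,
      hK_exp]
    field_simp

/-- Fix real parameters 0 < α < 1, η ≥ 0, β > 0, r > 0, K > 0 and δ ∈ ℝ with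
α·r < δ < r + (1−α)·β. Set ρ := (δ−r)/(α−1) and define
M(t) := max(η, K^{1/(α−1)}·e^{(ρ+β)t}) for t ≥ 0, extended by M(t) := η for t < 0, and let
μ_M denote the associated Lebesgue–Stieltjes measure (of the Stieltjes function f agreeing
with M) on [0,∞). Then the discounted cost of the tracking consumption plan satisfies:
(1/β)·∫_{[0,∞)} e^{−(r+β)t} dμ_M(t) = K^{1/(α−1)}·(1−α)(β+r)/(β(δ−αr)) − η/β
  if η ≤ K^{1/(α−1)}, and
(1/β)·∫_{[0,∞)} e^{−(r+β)t} dμ_M(t)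
  = ((1−α)β + r − δ)/(β(δ−αr)) · η^{(αr−δ)/((1−α)β+r−δ)} · K^{−(r+β)/((1−α)β+r−δ)}
  if η > K^{1/(α−1)}. -/
theorem stmt_13 (α η β r K δ : ℝ) (hα0 : 0 < α) (hα1 : α < 1) (hη : 0 ≤ η)
    (hβ : 0 < β) (hr : 0 < r) (hK : 0 < K)
    (hδ1 : α * r < δ) (hδ2 : δ < r + (1 - α) * β)
    (ρ : ℝ) (hρ : ρ = (δ - r) / (α - 1))
    (f : StieltjesFunction ℝ)
    (hf : ∀ t : ℝ, f t = if t < 0 then η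
        else max η (K ^ ((1 : ℝ) / (α - 1)) * Real.exp ((ρ + β) * t))) :
    (η ≤ K ^ ((1 : ℝ) / (α - 1)) →
      (1 / β) * ∫ t in Set.Ici (0 : ℝ), Real.exp (-(r + β) * t) ∂f.measure
        = K ^ ((1 : ℝ) / (α - 1)) * ((1 - α) * (β + r)) / (β * (δ - α * r)) - η / β) ∧
    (K ^ ((1 : ℝ) / (α - 1)) < η →
      (1 / β) * ∫ t in Set.Ici (0 : ℝ), Real.exp (-(r + β) * t) ∂f.measure
        = ((1 - α) * β + r - δ) / (β * (δ - α * r)) *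
            η ^ ((α * r - δ) / ((1 - α) * β + r - δ)) *
            K ^ (-(r + β) / ((1 - α) * β + r - δ))) :=
  stmt_13_general α η β r K δ hα1 hβ hK hδ1 hδ2 ρ hρ f hf
end

section
/- Fix real parameters 0 < α < 1, η ≥ 0, β > 0, r > 0, K > 0 and δ ∈ ℝ with δ ≥ r + (1−α)·β. Set ρ := (δ−r)/(α−1) (so that ρ + β ≤ 0) and define M(t) := max(η, K^{1/(α−1)}·e^{(ρ+β)t}) for t ≥ 0, extended by M(t) := η for t < 0, with associated Lebesgue–Stieltjes measure μ_M on [0,∞). Then: (a) M(t) = max(η, K^{1/(α−1)}) for every t ≥ 0, so μ_M is the point mass of size max(K^{1/(α−1)} − η, 0) at t = 0, and the level of satisfaction of the tracking plan is Y(t) = e^{−βt}·max(η, K^{1/(α−1)}); (b) the discounted cost equals (1/β)·∫_{[0,∞)} e^{−(r+β)t} dμ_M(t) = (1/β)·max(K^{1/(α−1)} − η, 0); (c) for any initial wealth w > 0, the choice K = (η + βw)^{α−1} makes this cost equal to w, i.e. the agent consumes the whole amount w in a single gulp at time 0. -/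
open MeasureTheory

/-! Since `δ ≥ r + (1 - α) β`, the exponent `ρ + β` is nonpositive, so on `[0, ∞)` the function `M`
is bounded by its value at `0`; being monotone, it is constant there. All the growth of `M` is
therefore its jump at `0`, so `μ_M` is a Dirac mass at `0` and the cost integral just evaluates
`e^{-(r+β)t}` at `t = 0`. -/

theorem StieltjesFunction.measure_eq_smul_dirac_of_step (f : StieltjesFunction ℝ) {x a b : ℝ}
    (h_lt : ∀ t < x, f t = a) (h_ge : ∀ t, x ≤ t → f t = b) :
    f.measure = ENNReal.ofReal (b - a) • Measure.dirac x := by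
  refine Measure.ext_of_Ioc _ _ fun s t hst => ?_
  rw [f.measure_Ioc, Measure.smul_apply, Measure.dirac_apply' _ measurableSet_Ioc, smul_eq_mul]
  rcases lt_or_ge s x with hs | hs
  · rcases lt_or_ge t x with ht | ht
    · have hx : x ∉ Set.Ioc s t := fun h => (h.2.trans_lt ht).false
      simp [h_lt s hs, h_lt t ht, hx]
    · simp [h_lt s hs, h_ge t ht, Set.indicator_of_mem (show x ∈ Set.Ioc s t from ⟨hs, ht⟩)]
  · have hx : x ∉ Set.Ioc s t := fun h => (h.1.trans_le hs).false
    simp [h_ge s hs, h_ge t (hs.trans hst.le), hx]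

theorem max_mul_exp_le_max {η c κ t : ℝ} (hc : 0 ≤ c) (hκ : κ ≤ 0) (ht : 0 ≤ t) :
    max η (c * Real.exp (κ * t)) ≤ max η c :=
  max_le_max le_rfl <| mul_le_of_le_one_right hc <|
    Real.exp_le_one_iff.2 (mul_nonpos_of_nonpos_of_nonneg hκ ht)

theorem stmt_14_general (α η β r K δ : ℝ) (hα1 : α < 1) (hη : 0 ≤ η)
    (hβ : 0 < β) (hK : 0 < K)
    (hδ : r + (1 - α) * β ≤ δ)
    (ρ : ℝ) (hρ : ρ = (δ - r) / (α - 1))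
    (f : StieltjesFunction ℝ)
    (hf : ∀ t : ℝ, f t = if t < 0 then η
        else max η (K ^ ((1 : ℝ) / (α - 1)) * Real.exp ((ρ + β) * t))) :
    (∀ t : ℝ, 0 ≤ t → f t = max η (K ^ ((1 : ℝ) / (α - 1)))) ∧
    f.measure = ENNReal.ofReal (max (K ^ ((1 : ℝ) / (α - 1)) - η) 0) •
      MeasureTheory.Measure.dirac (0 : ℝ) ∧
    (1 / β) * ∫ t in Set.Ici (0 : ℝ), Real.exp (-(r + β) * t) ∂f.measure
      = (1 / β) * max (K ^ ((1 : ℝ) / (α - 1)) - η) 0 ∧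
    (∀ w : ℝ, 0 < w → K = (η + β * w) ^ (α - 1) →
      (1 / β) * ∫ t in Set.Ici (0 : ℝ), Real.exp (-(r + β) * t) ∂f.measure = w) := by
  set c := K ^ ((1 : ℝ) / (α - 1)) with hc_def
  have hρβ : ρ + β ≤ 0 := by
    have : ρ ≤ -β := by rw [hρ, div_le_iff_of_neg (by linarith)]; linarith
    linarith
  have hconst (t : ℝ) (ht : 0 ≤ t) : f t = max η c := by
    have hf0 : f 0 = max η c := by simp [hf 0]
    refine le_antisymm ?_ (hf0 ▸ f.mono ht)
    rw [hf t, if_neg ht.not_gt]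
    exact max_mul_exp_le_max (Real.rpow_pos_of_pos hK _).le hρβ ht
  have hmeas : f.measure = ENNReal.ofReal (max (c - η) 0) • Measure.dirac 0 := by
    rw [show max (c - η) 0 = max η c - η by rw [← max_sub_sub_right, sub_self, max_comm]]
    exact f.measure_eq_smul_dirac_of_step (fun t ht => by simp [hf t, ht]) hconst
  have hcost : ∫ t in Set.Ici (0 : ℝ), Real.exp (-(r + β) * t) ∂f.measure = max (c - η) 0 := by
    rw [hmeas, Measure.restrict_smul, integral_smul_measure, setIntegral_dirac,
      ENNReal.toReal_ofReal (le_max_right _ _)]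
    simp
  refine ⟨hconst, hmeas, by rw [hcost], fun w hw hKw => ?_⟩
  have hc : c = η + β * w := by
    rw [hc_def, hKw, one_div, Real.rpow_rpow_inv (by positivity) (by linarith)]
  rw [hcost, hc, add_sub_cancel_left, max_eq_left (by positivity)]
  field_simp

/-- Fix real parameters 0 < α < 1, η ≥ 0, β > 0, r > 0, K > 0 and δ ∈ ℝ with
δ ≥ r + (1−α)·β. Set ρ := (δ−r)/(α−1) (so that ρ + β ≤ 0) and define
M(t) := max(η, K^{1/(α−1)}·e^{(ρ+β)t}) for t ≥ 0, extended by M(t) := η for t < 0, with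
associated Lebesgue–Stieltjes measure μ_M on [0,∞) (modelled by a Stieltjes function f
agreeing with M). Then:
(a) M(t) = max(η, K^{1/(α−1)}) for every t ≥ 0, so μ_M is the point mass of size
    max(K^{1/(α−1)} − η, 0) at t = 0;
(b) the discounted cost equals
    (1/β)·∫_{[0,∞)} e^{−(r+β)t} dμ_M(t) = (1/β)·max(K^{1/(α−1)} − η, 0);
(c) for any initial wealth w > 0, the choice K = (η + βw)^{α−1} makes this cost equal
    to w. -/
theorem stmt_14 (α η β r K δ : ℝ) (hα0 : 0 < α) (hα1 : α < 1) (hη : 0 ≤ η)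
    (hβ : 0 < β) (hr : 0 < r) (hK : 0 < K)
    (hδ : r + (1 - α) * β ≤ δ)
    (ρ : ℝ) (hρ : ρ = (δ - r) / (α - 1))
    (f : StieltjesFunction ℝ)
    (hf : ∀ t : ℝ, f t = if t < 0 then η
        else max η (K ^ ((1 : ℝ) / (α - 1)) * Real.exp ((ρ + β) * t))) :
    (∀ t : ℝ, 0 ≤ t → f t = max η (K ^ ((1 : ℝ) / (α - 1)))) ∧
    f.measure = ENNReal.ofReal (max (K ^ ((1 : ℝ) / (α - 1)) - η) 0) •
      MeasureTheory.Measure.dirac (0 : ℝ) ∧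
    (1 / β) * ∫ t in Set.Ici (0 : ℝ), Real.exp (-(r + β) * t) ∂f.measure
      = (1 / β) * max (K ^ ((1 : ℝ) / (α - 1)) - η) 0 ∧
    (∀ w : ℝ, 0 < w → K = (η + β * w) ^ (α - 1) →
      (1 / β) * ∫ t in Set.Ici (0 : ℝ), Real.exp (-(r + β) * t) ∂f.measure = w) :=
  stmt_14_general α η β r K δ hα1 hη hβ hK hδ ρ hρ f hf
end
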